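/- Let q^1,…,q^K be reals such that q^l = q^{l+1} for every index 1 ≤ l ≤ K−1 with h̄^l < h^l (i.e., q is constant across every ironed point). Then Σ_{i=1}^K p^i·q^i·w^i = Σ_{i=1}^K p^i·q^i·w̄^i. -/

import Mathlib

/-!
Writing `d = h - h̄ ≥ 0`, both sums telescope: `p^i w^i = h^i - h^{i-1}` and
`p^i w̄^i = h̄^i - h̄^{i-1}`, so their difference is `Σ q^i (d^i - d^{i-1})`. The points
`(g^0, h^0)` and `(g^K, h^K)` are the leftmost and rightmost points of the hull, hence lie on its
lower boundary: `d^0 = d^K = 0`. Since `q` is constant across every `l` with `d^l > 0`, we have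
`q^{l+1} d^l = q^l d^l` for all `l`, and summation by parts makes the difference vanish.
-/

open Finset

theorem sub_le_of_mem_convexHull {s : Set (ℝ × ℝ)} {M c : ℝ}
    (hs : ∀ P ∈ s, M * P.1 - P.2 ≤ c) {P : ℝ × ℝ} (hP : P ∈ convexHull ℝ s) :
    M * P.1 - P.2 ≤ c := by
  have hlin : IsLinearMap ℝ fun P : ℝ × ℝ => M * P.1 - P.2 :=
    ⟨fun P Q => by simp only [Prod.fst_add, Prod.snd_add]; ring,
      fun r P => by simp only [Prod.smul_fst, Prod.smul_snd, smul_eq_mul]; ring⟩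
  exact convexHull_min hs (convex_halfSpace_le hlin c) hP

theorem isLeast_convexHull_fiber_of_lt {s : Set (ℝ × ℝ)} (hs : s.Finite) {P₀ : ℝ × ℝ}
    (hP₀ : P₀ ∈ s) (a : ℝ) (hmin : ∀ P ∈ s, P ≠ P₀ → a * P₀.1 < a * P.1) :
    IsLeast {y | (P₀.1, y) ∈ convexHull ℝ s} P₀.2 := by
  refine ⟨subset_convexHull ℝ s hP₀, fun y hy => ?_⟩
  -- `P₀` minimises `P.2 - M * a * P.1` on `s`, hence on its hull
  obtain ⟨M, hM⟩ := (hs.image fun P => (P.2 - P₀.2) / (a * (P.1 - P₀.1))).bddBelow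
  have hsupport : ∀ P ∈ s, M * a * P.1 - P.2 ≤ M * a * P₀.1 - P₀.2 := by
    intro P hP
    rcases eq_or_ne P P₀ with rfl | hne
    · rfl
    have hpos : 0 < a * (P.1 - P₀.1) := by linarith [hmin P hP hne, mul_sub a P.1 P₀.1]
    have := (le_div_iff₀ hpos).1 (hM ⟨P, hP, rfl⟩)
    linarith
  linarith [sub_le_of_mem_convexHull hsupport hy]

theorem isLeast_convexHull_points_fiber_of_lt (g h : ℕ → ℝ) {K i : ℕ} (hi : i ≤ K) (a : ℝ)
    (hmin : ∀ j ≤ K, j ≠ i → a * g i < a * g j) :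
    IsLeast {y | (g i, y) ∈ convexHull ℝ {P : ℝ × ℝ | ∃ j ≤ K, P = (g j, h j)}} (h i) := by
  have hs : {P : ℝ × ℝ | ∃ j ≤ K, P = (g j, h j)}.Finite :=
    ((Set.finite_Iic K).image fun j => (g j, h j)).subset fun _ ⟨j, hj, hP⟩ => ⟨j, hj, hP.symm⟩
  refine isLeast_convexHull_fiber_of_lt hs ⟨i, hi, rfl⟩ a ?_
  rintro _ ⟨j, hj, rfl⟩ hne
  exact hmin j hj fun hji => hne (hji ▸ rfl)

theorem sum_Icc_one_lt_sum_Icc_one {M : Type*} [AddCommMonoid M] [PartialOrder M]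
    [IsOrderedCancelAddMonoid M] {p : ℕ → M} {a b : ℕ} (hab : a < b)
    (hp : ∀ i, a < i → i ≤ b → 0 < p i) :
    ∑ i ∈ Icc 1 a, p i < ∑ i ∈ Icc 1 b, p i :=
  sum_lt_sum_of_subset (Icc_subset_Icc_right hab.le) (right_mem_Icc.2 (by omega))
    (by simp [hab.not_ge]) (hp b hab le_rfl)
    fun j hj hja => (hp j (by simp at hj hja; omega) (mem_Icc.1 hj).2).le

theorem sum_Icc_one_sub_sum_Icc_one_pred {G : Type*} [AddCommGroup G] (p : ℕ → G) {i : ℕ}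
    (hi : 1 ≤ i) : ∑ j ∈ Icc 1 i, p j - ∑ j ∈ Icc 1 (i - 1), p j = p i := by
  obtain ⟨n, rfl⟩ : ∃ n, i = n + 1 := ⟨i - 1, by omega⟩
  rw [sum_Icc_succ_top (by omega), Nat.add_sub_cancel, add_sub_cancel_left]

theorem sum_Icc_mul_sub_eq_zero {R : Type*} [CommRing R] {K : ℕ} {q d : ℕ → R}
    (hd₀ : d 0 = 0) (hdK : d K = 0) (hq : ∀ l, 1 ≤ l → l ≤ K - 1 → d l ≠ 0 → q l = q (l + 1)) :
    ∑ i ∈ Icc 1 K, q i * (d i - d (i - 1)) = 0 := by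
  have hshift : ∀ l ∈ range K, q (l + 1) * d l = q l * d l := by
    intro l hl
    rcases Nat.eq_zero_or_pos l with rfl | hl₁
    · simp [hd₀]
    by_cases hdl : d l = 0
    · simp [hdl]
    · rw [hq l hl₁ (by simp at hl; omega) hdl]
  calc ∑ i ∈ Icc 1 K, q i * (d i - d (i - 1))
      = ∑ l ∈ range K, q (l + 1) * (d (l + 1) - d l) := by
        have := sum_Ico_add' (fun i => q i * (d i - d (i - 1))) 0 K 1
        simp only [Nat.add_sub_cancel, zero_add, Ico_add_one_right_eq_Icc] at this
        rw [range_eq_Ico, this]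
    _ = ∑ l ∈ range K, (q (l + 1) * d (l + 1) - q l * d l) :=
        sum_congr rfl fun l hl => by rw [mul_sub, hshift l hl]
    _ = 0 := by rw [sum_range_sub (fun l => q l * d l), hdK, hd₀, mul_zero, mul_zero, sub_zero]

theorem mul_virtualValuation_eq_sub {K i : ℕ} {x p w h : ℕ → ℝ} (hi : 1 ≤ i) (hiK : i ≤ K)
    (hpi : p i ≠ 0)
    (hw : ∀ i, 1 ≤ i → i ≤ K - 1 →
      w i = x i - (x (i + 1) - x i) * (∑ j ∈ Icc (i + 1) K, p j) / p i)
    (hwK : w K = x K)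
    (hh : ∀ i ≤ K, h i = -x (i + 1) * ∑ j ∈ Icc (i + 1) K, p j) :
    p i * w i = h i - h (i - 1) := by
  obtain ⟨n, rfl⟩ : ∃ n, i = n + 1 := ⟨i - 1, by omega⟩
  have htail : ∑ j ∈ Icc (n + 1) K, p j = p (n + 1) + ∑ j ∈ Icc (n + 1 + 1) K, p j := by
    rw [Icc_eq_cons_Ioc hiK, sum_cons, Icc_add_one_left_eq_Ioc]
  rw [Nat.add_sub_cancel, hh n (by omega), hh (n + 1) hiK, htail]
  rcases hiK.eq_or_lt with rfl | hlt
  · simp [hwK, mul_comm]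
  · rw [hw (n + 1) hi (by omega)]
    field_simp
    ring

theorem stmt_10_general (K : ℕ) (x p q w : ℕ → ℝ)
    (hp : ∀ i, 1 ≤ i → i ≤ K → 0 < p i)
    (hw : ∀ i, 1 ≤ i → i ≤ K - 1 →
      w i = x i - (x (i + 1) - x i) * (∑ j ∈ Finset.Icc (i + 1) K, p j) / p i)
    (hwK : w K = x K)
    (g h hbar wbar : ℕ → ℝ)
    (hg : ∀ i ≤ K, g i = ∑ j ∈ Finset.Icc 1 i, p j)
    (hh : ∀ i ≤ K, h i = -x (i + 1) * ∑ j ∈ Finset.Icc (i + 1) K, p j)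
    (hbar_min : ∀ i ≤ K, IsLeast {y : ℝ |
        ((g i, y) : ℝ × ℝ) ∈ convexHull ℝ {P : ℝ × ℝ | ∃ j ≤ K, P = (g j, h j)}}
      (hbar i))
    (hwbar : ∀ i, 1 ≤ i → i ≤ K →
      wbar i = (hbar i - hbar (i - 1)) / (g i - g (i - 1)))
    (hqconst : ∀ l, 1 ≤ l → l ≤ K - 1 → hbar l < h l → q l = q (l + 1)) :
    ∑ i ∈ Finset.Icc 1 K, p i * q i * w i =
      ∑ i ∈ Finset.Icc 1 K, p i * q i * wbar i := by
  have hg_lt : ∀ a b, a < b → b ≤ K → g a < g b := fun a b hab hb => by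
    rw [hg a (by omega), hg b hb]
    exact sum_Icc_one_lt_sum_Icc_one hab fun i hi hib => hp i (by omega) (hib.trans hb)
  have hbar_le : ∀ i ≤ K, hbar i ≤ h i := fun i hi =>
    (hbar_min i hi).2 (subset_convexHull ℝ _ ⟨i, hi, rfl⟩)
  have hbar₀ : hbar 0 = h 0 := (hbar_min 0 (K.zero_le)).unique <|
    isLeast_convexHull_points_fiber_of_lt g h (K.zero_le) 1 fun j hj hj₀ => by
      simpa using hg_lt 0 j (by omega) hj
  have hbarK : hbar K = h K := (hbar_min K le_rfl).unique <|
    isLeast_convexHull_points_fiber_of_lt g h le_rfl (-1) fun j hj hjK => by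
      simpa using hg_lt j K (by omega) le_rfl
  have hpw : ∀ i ∈ Icc 1 K, p i * q i * w i = q i * (h i - h (i - 1)) := fun i hi => by
    obtain ⟨hi₁, hiK⟩ := mem_Icc.1 hi
    rw [mul_comm (p i), mul_assoc,
      mul_virtualValuation_eq_sub hi₁ hiK (hp i hi₁ hiK).ne' hw hwK hh]
  have hpwbar : ∀ i ∈ Icc 1 K, p i * q i * wbar i = q i * (hbar i - hbar (i - 1)) := fun i hi => by
    obtain ⟨hi₁, hiK⟩ := mem_Icc.1 hi
    rw [hwbar i hi₁ hiK, hg i hiK, hg (i - 1) (by omega), sum_Icc_one_sub_sum_Icc_one_pred p hi₁]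
    field_simp [(hp i hi₁ hiK).ne']
  rw [sum_congr rfl hpw, sum_congr rfl hpwbar, ← sub_eq_zero, ← sum_sub_distrib]
  calc _ = ∑ i ∈ Icc 1 K, q i * ((h - hbar) i - (h - hbar) (i - 1)) :=
        sum_congr rfl fun i _ => by simp only [Pi.sub_apply]; ring
    _ = 0 := sum_Icc_mul_sub_eq_zero (by simp [hbar₀]) (by simp [hbarK])
        fun l hl₁ hlK hne => hqconst l hl₁ hlK <| (hbar_le l (by omega)).lt_of_ne
          fun heq => hne (by simp [heq])

/-- If q is constant across every ironed point
(q^l = q^{l+1} whenever h̄^l < h^l for 1 ≤ l ≤ K−1), then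
Σ p^i·q^i·w^i = Σ p^i·q^i·w̄^i. -/
theorem stmt_10 (K : ℕ) (hK : 1 ≤ K) (x p q w : ℕ → ℝ)
    (hx0 : 0 ≤ x 1)
    (hxlt : ∀ i, 1 ≤ i → i < K → x i < x (i + 1))
    (hp : ∀ i, 1 ≤ i → i ≤ K → 0 < p i)
    (hp1 : ∑ i ∈ Finset.Icc 1 K, p i = 1)
    (hw : ∀ i, 1 ≤ i → i ≤ K - 1 →
      w i = x i - (x (i + 1) - x i) * (∑ j ∈ Finset.Icc (i + 1) K, p j) / p i)
    (hwK : w K = x K)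
    (g h hbar wbar : ℕ → ℝ)
    (hg : ∀ i ≤ K, g i = ∑ j ∈ Finset.Icc 1 i, p j)
    (hh : ∀ i ≤ K, h i = -x (i + 1) * ∑ j ∈ Finset.Icc (i + 1) K, p j)
    (hbar_min : ∀ i ≤ K, IsLeast {y : ℝ |
        ((g i, y) : ℝ × ℝ) ∈ convexHull ℝ {P : ℝ × ℝ | ∃ j ≤ K, P = (g j, h j)}}
      (hbar i))
    (hwbar : ∀ i, 1 ≤ i → i ≤ K →
      wbar i = (hbar i - hbar (i - 1)) / (g i - g (i - 1)))
    (hqconst : ∀ l, 1 ≤ l → l ≤ K - 1 → hbar l < h l → q l = q (l + 1)) :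
    ∑ i ∈ Finset.Icc 1 K, p i * q i * w i =
      ∑ i ∈ Finset.Icc 1 K, p i * q i * wbar i :=
  stmt_10_general K x p q w hp hw hwK g h hbar wbar hg hh hbar_min hwbar hqconst
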